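/- arXiv:2305.00250 — 5 statements merged into one kernel-verified Lean document; each statement's English description precedes it below -/
import Mathlib

section
/- Let k > 0 and R > 0, let S be the sphere of radius R centered at the origin in ℝ³ with surface measure σ, and let u ∈ L²(S, σ). Then the function x ↦ (Tu)(x) = ∫_S u(y)·exp(𝐢k‖x−y‖)/(4π‖x−y‖) dσ(y) is real-analytic (AnalyticOn ℝ) on the open ball {x ∈ ℝ³ : ‖x‖ < R}. -/
open MeasureTheory Metric Complex

noncomputable section

/-- The 2-dimensional surface measure on the sphere of radius `R` centered at the origin
in `ℝ³ = EuclideanSpace ℝ (Fin 3)`, realized as a measure on the ambient space supported on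
the sphere: the pushforward of the canonical unit-sphere measure `volume.toSphere`
under the scaling `y ↦ R • y`, rescaled by the factor `R ^ 2`. -/
def sphereSurfaceMeasure (R : ℝ) : Measure (EuclideanSpace ℝ (Fin 3)) :=
  ENNReal.ofReal (R ^ 2) •
    Measure.map (fun y => R • y)
      (Measure.map Subtype.val
        ((volume : Measure (EuclideanSpace ℝ (Fin 3))).toSphere))

/-- The complex conjugate of the Helmholtz Green's function,
`conj G(x,y) = exp(𝐢 k ‖x - y‖) / (4 π ‖x - y‖)`. -/
def conjG (k : ℝ) (x y : EuclideanSpace ℝ (Fin 3)) : ℂ :=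
  Complex.exp (Complex.I * (k : ℂ) * (‖x - y‖ : ℂ)) / (4 * (Real.pi : ℂ) * (‖x - y‖ : ℂ))

namespace Helm
abbrev E3 : Type := EuclideanSpace ℝ (Fin 3)
abbrev S1 : Set E3 := Metric.sphere (0:E3) 1
abbrev Ar : Type := C(S1, ℝ)
abbrev Ac : Type := C(S1, ℂ)

def rmap (R : ℝ) (x : E3) : Ar :=
  ⟨fun w => ‖x - R • (w : E3)‖, (continuous_const.sub ((continuous_subtype_val).const_smul R)).norm⟩

def Bmap : E3 →L[ℝ] Ar :=
  LinearMap.mkContinuous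
    { toFun := fun x => ⟨fun w => inner ℝ x (w : E3), (Continuous.inner continuous_const continuous_subtype_val)⟩
      map_add' := by intro a b; ext w; simp [inner_add_left]
      map_smul' := by intro c a; ext w; simp [inner_smul_left] }
    1 (by
      intro x
      rw [one_mul]
      refine (ContinuousMap.norm_le _ (norm_nonneg x)).mpr ?_
      intro w
      refine (abs_real_inner_le_norm x _).trans ?_
      have : ‖(w : E3)‖ = 1 := by simpa using w.2
      simp [this])

def Qmap (R : ℝ) (x : E3) : Ar := (‖x‖ ^ 2 + R ^ 2) • 1 - (2 * R) • Bmap x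

lemma Qmap_apply (R : ℝ) (x : E3) (w : S1) : Qmap R x w = ‖x - R • (w : E3)‖ ^ 2 := by
  have hw : ‖(w : E3)‖ = 1 := by simpa using w.2
  have h : ‖x - R • (w:E3)‖ ^ 2 = ‖x‖^2 - 2*R*(inner ℝ x (w:E3)) + R^2 := by
    rw [norm_sub_sq_real]
    simp [inner_smul_right, norm_smul, hw, abs_mul]
    ring_nf
  rw [h]
  simp [Qmap, Bmap, LinearMap.mkContinuous_apply, ContinuousMap.sub_apply, ContinuousMap.smul_apply]
  ring

lemma rmap_mul_self (R : ℝ) (x : E3) : rmap R x * rmap R x = Qmap R x := by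
  ext w
  simp [rmap, Qmap_apply, sq]

end Helm

namespace Helm2
open Helm

/-- units of `C(S1, 𝕜)` from nonvanishing functions -/
def cUnit {𝕜 : Type} [Field 𝕜] [TopologicalSpace 𝕜] [IsTopologicalRing 𝕜] [ContinuousInv₀ 𝕜]
    (v : C(S1, 𝕜)) (h : ∀ w, v w ≠ 0) : (C(S1, 𝕜))ˣ :=
  ⟨v, ⟨fun w => (v w)⁻¹, (map_continuous v).inv₀ h⟩,
    by ext w; exact mul_inv_cancel₀ (h w), by ext w; exact inv_mul_cancel₀ (h w)⟩

@[simp] lemma cUnit_val {𝕜 : Type} [Field 𝕜] [TopologicalSpace 𝕜] [IsTopologicalRing 𝕜]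
    [ContinuousInv₀ 𝕜] (v : C(S1, 𝕜)) (h : ∀ w, v w ≠ 0) : ((cUnit v h : C(S1,𝕜))) = v := rfl

/-- multiplication by a unit as a continuous linear equivalence -/
def mulLeftCLE {𝕜 A : Type} [NontriviallyNormedField 𝕜] [NormedCommRing A] [NormedAlgebra 𝕜 A]
    (u : Aˣ) : A ≃L[𝕜] A :=
  { toFun := fun h => (u : A) * h
    invFun := fun h => ((u⁻¹ : Aˣ) : A) * h
    map_add' := fun a b => mul_add _ a b
    map_smul' := fun c a => mul_smul_comm c _ a
    left_inv := fun a => by show (↑u⁻¹ : A) * ((u:A) * a) = a; rw [← mul_assoc, u.inv_mul, one_mul]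
    right_inv := fun a => by show (u:A) * ((↑u⁻¹:A) * a) = a; rw [← mul_assoc, u.mul_inv, one_mul]
    continuous_toFun := continuous_mul_left _
    continuous_invFun := continuous_mul_left _ }

lemma mulLeftCLE_apply {𝕜 A : Type} [NontriviallyNormedField 𝕜] [NormedCommRing A]
    [NormedAlgebra 𝕜 A] (u : Aˣ) (a : A) : mulLeftCLE (𝕜 := 𝕜) u a = (u : A) * a := rfl

lemma rmap_lower (R : ℝ) (x : E3) (w : S1) : R - ‖x‖ ≤ rmap R x w := by
  have hw : ‖(w : E3)‖ = 1 := by simpa using w.2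
  have h1 : ‖R • (w:E3)‖ - ‖x‖ ≤ ‖R • (w:E3) - x‖ := norm_sub_norm_le _ _
  have h2 : ‖R • (w:E3)‖ = |R| := by rw [norm_smul, hw, mul_one]; rfl
  have h3 : R ≤ |R| := le_abs_self R
  have h4 : ‖R • (w:E3) - x‖ = rmap R x w := by
    rw [← norm_neg]; simp only [neg_sub]; rfl
  linarith

lemma analyticAt_Qmap (R : ℝ) (x : E3) : AnalyticAt ℝ (Qmap R) x := by
  have hdiag : AnalyticAt ℝ (fun y : E3 => (y, y)) x := analyticAt_id.prod analyticAt_id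
  have hinner : AnalyticAt ℝ (fun y : E3 => (inner ℝ y y : ℝ)) x := by
    have h := AnalyticAt.comp (g := fun p : E3 × E3 => (innerSL ℝ (E := E3)) p.1 p.2)
      (f := fun y : E3 => (y, y)) ((innerSL ℝ (E := E3)).analyticAt_bilinear (x, x)) hdiag
    exact h.congr (Filter.Eventually.of_forall fun y => rfl)
  have hn : AnalyticAt ℝ (fun y : E3 => ‖y‖ ^ 2) x :=
    hinner.congr (Filter.Eventually.of_forall fun y => real_inner_self_eq_norm_sq y)
  have h1 : AnalyticAt ℝ (fun y : E3 => ‖y‖ ^ 2 + R ^ 2) x := by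
    have h2 := hn.add (analyticAt_const (v := (R ^ 2 : ℝ)))
    exact h2.congr (Filter.Eventually.of_forall fun y => by simp)
  have h3 : AnalyticAt ℝ (fun y : E3 => (‖y‖ ^ 2 + R ^ 2) • (1 : Ar)) x :=
    AnalyticAt.smul (A := ℝ) h1 (analyticAt_const (v := (1 : Ar)))
  have h4 : AnalyticAt ℝ (fun y : E3 => (2 * R : ℝ) • Bmap y) x :=
    AnalyticAt.smul (A := ℝ) (analyticAt_const (v := (2 * R : ℝ))) (Bmap.analyticAt x)
  have h5 := h3.sub h4
  exact h5.congr (Filter.Eventually.of_forall fun y => by simp [Qmap])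

lemma analyticAt_rmap {R : ℝ} {x₀ : E3} (hx : ‖x₀‖ < R) : AnalyticAt ℝ (rmap R) x₀ := by
  set v₀ := rmap R x₀ with hv₀def
  have hm : 0 < R - ‖x₀‖ := by linarith
  have hpos : ∀ w, 0 < v₀ w := fun w => lt_of_lt_of_le hm (rmap_lower R x₀ w)
  have hne : ∀ w, (v₀ + v₀) w ≠ 0 := fun w => by
    have := hpos w; simp only [ContinuousMap.add_apply]; positivity
  set u : (Ar)ˣ := cUnit (v₀ + v₀) hne with hu
  set e : Ar ≃L[ℝ] Ar := mulLeftCLE (𝕜 := ℝ) u with he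
  have hsq : ContDiffAt ℝ (⊤ : ℕ∞) (fun v : Ar => v * v) v₀ := (contDiff_id.mul contDiff_id).contDiffAt
  have hder : HasFDerivAt (fun v : Ar => v * v) (e : Ar →L[ℝ] Ar) v₀ := by
    have h := HasFDerivAt.mul' (𝕜 := ℝ) (hasFDerivAt_id v₀) (hasFDerivAt_id v₀)
    refine h.congr_fderiv ?_
    ext h w
    simp [he, mulLeftCLE_apply, hu, cUnit, smul_eq_mul, ContinuousMap.add_apply,
      ContinuousMap.mul_apply]
    ring
  set phe := hsq.toOpenPartialHomeomorph _ hder (by simp) with hphe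
  have hcoe : ⇑phe = fun v : Ar => v * v := hsq.toOpenPartialHomeomorph_coe hder (by simp)
  have hsrc : v₀ ∈ phe.source := hsq.mem_toOpenPartialHomeomorph_source hder (by simp)
  have htgt : v₀ * v₀ ∈ phe.target := hsq.image_mem_toOpenPartialHomeomorph_target hder (by simp)
  obtain ⟨p, hp⟩ : AnalyticAt ℝ (fun v : Ar => v * v) v₀ := analyticAt_id.mul analyticAt_id
  have hp1 : p 1 = (continuousMultilinearCurryFin1 ℝ Ar Ar).symm (e : Ar →L[ℝ] Ar) := by
    have h2 := hp.hasFDerivAt.unique hder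
    rw [← h2]
    simp
  have hpphe : HasFPowerSeriesAt (⇑phe) p v₀ := by rw [hcoe]; exact hp
  have hsymm := phe.hasFPowerSeriesAt_symm hsrc hpphe hp1
  have hvq : v₀ * v₀ = Qmap R x₀ := rmap_mul_self R x₀
  have hphev : phe v₀ = Qmap R x₀ := by rw [hcoe]; exact hvq
  have hga : AnalyticAt ℝ (⇑phe.symm) (Qmap R x₀) := by
    rw [← hphev]; exact hsymm.analyticAt
  have hcomp : AnalyticAt ℝ (fun x => phe.symm (Qmap R x)) x₀ :=
    hga.comp (analyticAt_Qmap R x₀)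
  refine hcomp.congr ?_
  -- eventual equality
  have htgt' : Qmap R x₀ ∈ phe.target := hvq ▸ htgt
  have hcontsymm : ContinuousAt (fun x => phe.symm (Qmap R x)) x₀ :=
    (phe.continuousAt_symm htgt').comp (analyticAt_Qmap R x₀).continuousAt
  have hval : phe.symm (Qmap R x₀) = v₀ := by
    rw [← hphev]; exact phe.left_inv hsrc
  have ev1 : ∀ᶠ x in nhds x₀, ‖phe.symm (Qmap R x) - v₀‖ < (R - ‖x₀‖)/2 := by
    have : ContinuousAt (fun x => ‖phe.symm (Qmap R x) - v₀‖) x₀ :=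
      (hcontsymm.sub continuousAt_const).norm
    have h0 : ‖phe.symm (Qmap R x₀) - v₀‖ < (R - ‖x₀‖)/2 := by
      rw [hval, sub_self, norm_zero]; linarith
    exact this.eventually_lt continuousAt_const h0
  have ev2 : ∀ᶠ x in nhds x₀, Qmap R x ∈ phe.target :=
    (analyticAt_Qmap R x₀).continuousAt (phe.open_target.mem_nhds htgt')
  have ev3 : ∀ᶠ x in nhds x₀, ‖x‖ < R := by
    have : ContinuousAt (fun x : E3 => ‖x‖) x₀ := continuousAt_id.norm
    exact this.eventually_lt continuousAt_const hx
  filter_upwards [ev1, ev2, ev3] with x h1 h2 h3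
  -- show phe.symm (Qmap R x) = rmap R x
  set v := phe.symm (Qmap R x) with hvdef
  have hvsq : v * v = Qmap R x := by
    have := phe.right_inv h2
    rwa [hcoe] at this
  have hposx : ∀ w, 0 < rmap R x w := fun w => lt_of_lt_of_le (by linarith) (rmap_lower R x w)
  ext w
  have hsqw : v w * v w = rmap R x w * rmap R x w := by
    have h4 := congrArg (fun f : Ar => f w) hvsq
    have h5 := congrArg (fun f : Ar => f w) (rmap_mul_self R x)
    simp only [ContinuousMap.mul_apply] at h4 h5
    rw [h4, h5]
  have hvw : 0 < v w := by
    have hb : |v w - v₀ w| ≤ ‖v - v₀‖ := by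
      simpa [ContinuousMap.sub_apply] using (v - v₀).norm_coe_le_norm w
    have := hpos w
    have := rmap_lower R x₀ w
    have habs := abs_le.mp (hb.trans h1.le)
    linarith
  rcases mul_self_eq_mul_self_iff.mp hsqw with h | h
  · exact h
  · exfalso; have := hposx w; linarith

end Helm2

namespace Helm3
open Helm Helm2

def cC : Ar →L[ℝ] Ac :=
  LinearMap.mkContinuous
    { toFun := fun v => ⟨fun w => (v w : ℂ), Complex.continuous_ofReal.comp (map_continuous v)⟩
      map_add' := by intro a b; ext w; simp
      map_smul' := by intro c a; ext w; simp }
    1 (by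
      intro v; rw [one_mul]
      refine (ContinuousMap.norm_le _ (norm_nonneg v)).mpr ?_
      intro w
      simpa using v.norm_coe_le_norm w)

@[simp] lemma cC_apply (v : Ar) (w : S1) : (cC v) w = (v w : ℂ) := rfl

def Kmap (k R : ℝ) (x : E3) : Ac :=
  NormedSpace.exp ((Complex.I * k) • cC (rmap R x)) *
    Ring.inverse ((4 * (Real.pi : ℂ)) • cC (rmap R x))

lemma vx_ne (R : ℝ) (x : E3) (hx : ‖x‖ < R) (w : S1) :
    ((4 * (Real.pi : ℂ)) • cC (rmap R x)) w ≠ 0 := by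
  have h1 : 0 < rmap R x w := lt_of_lt_of_le (by linarith) (rmap_lower R x w)
  have hpi : (0:ℝ) < Real.pi := Real.pi_pos
  simp only [ContinuousMap.smul_apply, cC_apply, smul_eq_mul]
  intro h
  rw [mul_eq_zero] at h
  rcases h with h | h
  · norm_num at h
  · exact h1.ne' (by exact_mod_cast h)

lemma analyticAt_Kmap (k : ℝ) {R : ℝ} {x₀ : E3} (hx : ‖x₀‖ < R) :
    AnalyticAt ℝ (Kmap k R) x₀ := by
  have hr := analyticAt_rmap hx
  have hcr : AnalyticAt ℝ (fun x => cC (rmap R x)) x₀ :=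
    (cC.analyticAt (rmap R x₀)).comp hr
  have ha : AnalyticAt ℝ (fun x => (Complex.I * k) • cC (rmap R x)) x₀ :=
    AnalyticAt.smul (A := ℂ) analyticAt_const hcr
  have hb : AnalyticAt ℝ (fun x => (4 * (Real.pi : ℂ)) • cC (rmap R x)) x₀ :=
    AnalyticAt.smul (A := ℂ) analyticAt_const hcr
  have hexp : AnalyticAt ℝ (NormedSpace.exp : Ac → Ac)
      ((Complex.I * k) • cC (rmap R x₀)) :=
    NormedSpace.analyticAt_exp_of_mem_ball (𝕂 := ℝ) _
      (by rw [NormedSpace.expSeries_radius_eq_top ℝ Ac]; exact edist_lt_top _ _)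
  have h1 : AnalyticAt ℝ (fun x => NormedSpace.exp ((Complex.I * k) • cC (rmap R x))) x₀ :=
    AnalyticAt.comp (f := fun x => (Complex.I * k) • cC (rmap R x)) hexp ha
  have hinv : AnalyticAt ℝ (Ring.inverse : Ac → Ac)
      ((4 * (Real.pi : ℂ)) • cC (rmap R x₀)) :=
    analyticAt_inverse (𝕜 := ℝ)
      (cUnit ((4 * (Real.pi : ℂ)) • cC (rmap R x₀)) (vx_ne R x₀ hx))
  have h2 : AnalyticAt ℝ (fun x => Ring.inverse ((4 * (Real.pi : ℂ)) • cC (rmap R x))) x₀ :=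
    AnalyticAt.comp (f := fun x => (4 * (Real.pi : ℂ)) • cC (rmap R x)) hinv hb
  exact h1.mul h2

end Helm3

namespace Helm4
open Helm Helm2 Helm3

abbrev ν : Measure ↥(Metric.sphere (0:E3) 1) := (volume : Measure E3).toSphere

def evC (w : S1) : Ac →+* ℂ :=
  (Pi.evalRingHom (fun _ : S1 => ℂ) w).comp (ContinuousMap.coeFnRingHom)

lemma evC_cont (w : S1) : Continuous (evC w) :=
  continuous_eval_const w

lemma Kmap_apply {k R : ℝ} {x : E3} (hx : ‖x‖ < R) (w : S1) :
    Kmap k R x w = conjG k x (R • (w : E3)) := by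
  have hr : (0:ℝ) < rmap R x w := lt_of_lt_of_le (by linarith) (rmap_lower R x w)
  have h1 : (NormedSpace.exp ((Complex.I * k) • cC (rmap R x))) w
      = Complex.exp (Complex.I * k * (‖x - R • (w:E3)‖ : ℝ)) := by
    have hm := NormedSpace.map_exp (evC w) (evC_cont w) ((Complex.I * k) • cC (rmap R x))
    have hev : evC w ((Complex.I * k) • cC (rmap R x))
        = Complex.I * k * (‖x - R • (w:E3)‖ : ℝ) := by
      show ((Complex.I * k) • cC (rmap R x)) w = _
      simp only [ContinuousMap.smul_apply, cC_apply, smul_eq_mul]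
      rfl
    have : evC w (NormedSpace.exp ((Complex.I * k) • cC (rmap R x)))
        = NormedSpace.exp (Complex.I * k * (‖x - R • (w:E3)‖ : ℝ)) := by
      rw [hm, hev]
    rw [show evC w (NormedSpace.exp ((Complex.I * k) • cC (rmap R x)))
        = (NormedSpace.exp ((Complex.I * k) • cC (rmap R x))) w from rfl] at this
    rw [this, ← Complex.exp_eq_exp_ℂ]
  have h2 : (Ring.inverse ((4 * (Real.pi : ℂ)) • cC (rmap R x))) w
      = ((4 * (Real.pi : ℂ) * (‖x - R • (w:E3)‖ : ℝ)))⁻¹ := by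
    have hu : ((4 * (Real.pi : ℂ)) • cC (rmap R x))
        = ((cUnit _ (vx_ne R x hx) : (Ac)ˣ) : Ac) := rfl
    rw [hu, Ring.inverse_unit]
    show ((((4 * (Real.pi : ℂ)) • cC (rmap R x)) w))⁻¹ = _
    simp only [ContinuousMap.smul_apply, cC_apply, smul_eq_mul]
    rfl
  show (NormedSpace.exp ((Complex.I * k) • cC (rmap R x))
      * Ring.inverse ((4 * (Real.pi : ℂ)) • cC (rmap R x))) w = _
  rw [ContinuousMap.mul_apply, h1, h2, conjG, div_eq_mul_inv]

end Helm4

namespace Helm5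
open Helm Helm2 Helm3 Helm4

lemma finite_surf (R : ℝ) : IsFiniteMeasure (sphereSurfaceMeasure R) := by
  rw [sphereSurfaceMeasure]
  have i1 : IsFiniteMeasure (Measure.map (Subtype.val) ν) :=
    Measure.isFiniteMeasure_map _ _
  have i2 : IsFiniteMeasure (Measure.map (fun y : E3 => R • y) (Measure.map Subtype.val ν)) :=
    Measure.isFiniteMeasure_map _ _
  constructor
  rw [Measure.smul_apply, smul_eq_mul]
  exact ENNReal.mul_lt_top ENNReal.ofReal_lt_top (measure_lt_top _ _)

lemma ac_smul (R : ℝ) (hR : 0 < R) :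
    (Measure.map (fun y : E3 => R • y) (Measure.map Subtype.val ν)) ≪ sphereSurfaceMeasure R := by
  rw [sphereSurfaceMeasure]
  intro s hs
  rw [Measure.smul_apply, smul_eq_mul, mul_eq_zero] at hs
  rcases hs with h | h
  · exfalso
    rw [ENNReal.ofReal_eq_zero] at h
    nlinarith
  · exact h

lemma integral_surf (R : ℝ) (hR : 0 < R) (f : E3 → ℂ)
    (hf : AEStronglyMeasurable f (sphereSurfaceMeasure R)) :
    ∫ y, f y ∂(sphereSurfaceMeasure R)
      = (R ^ 2) • ∫ w : ↥S1, f (R • (w : E3)) ∂ν := by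
  have hfm : AEStronglyMeasurable f
      (Measure.map (fun y : E3 => R • y) (Measure.map Subtype.val ν)) :=
    hf.mono_ac (ac_smul R hR)
  have h1 : AEMeasurable (fun y : E3 => R • y) (Measure.map Subtype.val ν) :=
    (continuous_const_smul R).aemeasurable
  have h2 : AEMeasurable (Subtype.val : ↥S1 → E3) ν := continuous_subtype_val.aemeasurable
  rw [sphereSurfaceMeasure, integral_smul_measure, ENNReal.toReal_ofReal (by positivity)]
  congr 1
  rw [integral_map h1 hfm]
  have h4 : AEStronglyMeasurable (fun y : E3 => f (R • y)) (Measure.map Subtype.val ν) :=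
    hfm.comp_aemeasurable h1
  rw [integral_map h2 h4]

lemma integrable_comp (R : ℝ) (hR : 0 < R) (g : E3 → ℂ)
    (hg : Integrable g (sphereSurfaceMeasure R)) :
    Integrable (fun w : ↥S1 => g (R • (w : E3))) ν := by
  have hc0 : (ENNReal.ofReal (R ^ 2)) ≠ 0 := by
    rw [Ne, ENNReal.ofReal_eq_zero, not_le]; positivity
  have hgm : Integrable g (Measure.map (fun y : E3 => R • y) (Measure.map Subtype.val ν)) := by
    rw [sphereSurfaceMeasure] at hg
    exact (integrable_smul_measure hc0 ENNReal.ofReal_ne_top).mp hg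
  have h1 : AEMeasurable (fun y : E3 => R • y) (Measure.map Subtype.val ν) :=
    (continuous_const_smul R).aemeasurable
  have h2 : AEMeasurable (Subtype.val : ↥S1 → E3) ν := continuous_subtype_val.aemeasurable
  have h3 := (integrable_map_measure hgm.aestronglyMeasurable h1).mp hgm
  exact (integrable_map_measure (hgm.aestronglyMeasurable.comp_aemeasurable h1) h2).mp h3

end Helm5


open Helm Helm2 Helm3 Helm4 Helm5 in
/-- For `u ∈ L²(S, σ)`, the function `(T u)(x) = ∫_S u(y) conj G(x,y) dσ(y)` is real-analytic
on the open ball `B(0, R) = {x : ‖x‖ < R}`. -/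
theorem T_analyticOn_ball
    (k R : ℝ) (hk : 0 < k) (hR : 0 < R)
    (u : EuclideanSpace ℝ (Fin 3) → ℂ)
    (hu : MemLp u 2 (sphereSurfaceMeasure R)) :
    AnalyticOn ℝ (fun x => ∫ y, u y * conjG k x y ∂(sphereSurfaceMeasure R))
      (ball (0 : EuclideanSpace ℝ (Fin 3)) R) := by
  haveI := finite_surf R
  have hu1 : AEStronglyMeasurable u (sphereSurfaceMeasure R) := hu.1
  have hint : Integrable u (sphereSurfaceMeasure R) := hu.integrable one_le_two
  set U : ↥S1 → ℂ := fun w => u (R • (w : E3)) with hUdef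
  have hUint : Integrable U ν := integrable_comp R hR u hint
  have hIv : ∀ v : Ac, Integrable (fun w => U w * v w) ν := by
    intro v
    have h := hUint.bdd_mul (map_continuous v).aestronglyMeasurable
      (Filter.Eventually.of_forall fun w => v.norm_coe_le_norm w)
    exact h.congr (Filter.Eventually.of_forall fun w => mul_comm _ _)
  set J : Ac →L[ℝ] ℂ := LinearMap.mkContinuous
    { toFun := fun v => ∫ w, U w * v w ∂ν
      map_add' := by
        intro a b
        show (∫ w, U w * (a + b) w ∂ν) = (∫ w, U w * a w ∂ν) + ∫ w, U w * b w ∂ν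
        have h : (fun w => U w * (a + b) w) = fun w => U w * a w + U w * b w :=
          funext fun w => by simp [ContinuousMap.add_apply, mul_add]
        rw [h, integral_add (hIv a) (hIv b)]
      map_smul' := by
        intro c a
        show (∫ w, U w * (c • a) w ∂ν) = (RingHom.id ℝ) c • ∫ w, U w * a w ∂ν
        have h : (fun w => U w * (c • a) w) = fun w => c • (U w * a w) :=
          funext fun w => by
            simp [ContinuousMap.smul_apply, Complex.real_smul]
            ring
        rw [h, integral_smul]
        rfl }
    (∫ w, ‖U w‖ ∂ν)
    (by
      intro v
      calc ‖∫ w, U w * v w ∂ν‖ ≤ ∫ w, ‖U w * v w‖ ∂ν := norm_integral_le_integral_norm _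
        _ ≤ ∫ w, ‖U w‖ * ‖v‖ ∂ν := by
            refine integral_mono (hIv v).norm (hUint.norm.mul_const _) fun w => ?_
            rw [norm_mul]
            exact mul_le_mul_of_nonneg_left (v.norm_coe_le_norm w) (norm_nonneg _)
        _ = (∫ w, ‖U w‖ ∂ν) * ‖v‖ := integral_mul_const _ _)
    with hJdef
  have key : AnalyticOnNhd ℝ
      (fun x => ∫ y, u y * conjG k x y ∂(sphereSurfaceMeasure R))
      (ball (0 : EuclideanSpace ℝ (Fin 3)) R) := by
    intro x₀ hx₀
    have hx : ‖x₀‖ < R := mem_ball_zero_iff.mp hx₀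
    have hK := analyticAt_Kmap k hx
    have hJK : AnalyticAt ℝ (fun x => (R ^ 2 : ℝ) • J (Kmap k R x)) x₀ :=
      AnalyticAt.smul (A := ℝ) analyticAt_const
        (AnalyticAt.comp (f := Kmap k R) (J.analyticAt _) hK)
    refine hJK.congr ?_
    filter_upwards [isOpen_ball.mem_nhds hx₀] with x hx'
    have hxR : ‖x‖ < R := mem_ball_zero_iff.mp hx'
    have hconjm : AEStronglyMeasurable (fun y => conjG k x y) (sphereSurfaceMeasure R) := by
      refine Measurable.aestronglyMeasurable ?_
      have hnorm : Measurable fun y : E3 => ((‖x - y‖ : ℝ) : ℂ) :=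
        Complex.measurable_ofReal.comp (continuous_const.sub continuous_id).norm.measurable
      exact (Complex.measurable_exp.comp (hnorm.const_mul _)).div (hnorm.const_mul _)
    have haesm : AEStronglyMeasurable (fun y => u y * conjG k x y) (sphereSurfaceMeasure R) :=
      hu1.mul hconjm
    show (R ^ 2 : ℝ) • J (Kmap k R x) = _
    rw [integral_surf R hR _ haesm]
    congr 1
    have h1 : J (Kmap k R x) = ∫ w, U w * (Kmap k R x) w ∂ν := rfl
    rw [h1]
    refine integral_congr_ae (Filter.Eventually.of_forall fun w => ?_)
    show U w * (Kmap k R x) w = u (R • (w : E3)) * conjG k x (R • (w : E3))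
    rw [Kmap_apply hxR w]
  exact key.analyticOn
end
end

section
/- Let k > 0 and R > 0, let S be the sphere of radius R centered at the origin in ℝ³ with surface measure σ, and let u ∈ L²(S, σ). If the function (Tu)(x) = ∫_S u(y)·exp(𝐢k‖x−y‖)/(4π‖x−y‖) dσ(y) vanishes on some nonempty open subset Ω of the open ball B(0,R) = {x ∈ ℝ³ : ‖x‖ < R}, then Tu vanishes on all of B(0,R). -/
/-!
Fix `x₀ ∈ Ω` and `x` in the ball, and move along the line `t ↦ x₀ + t • (x - x₀)`. There `conj G`
depends on `t` only through the squared distance to `y`, a quadratic polynomial in `t`, and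
`w ↦ exp(𝐢k√w)/(4π√w)` is holomorphic off the negative real axis. On the convex set of complex `t`
with `‖x₀ + (Re t) • (x - x₀)‖ + |Im t| ‖x - x₀‖ < R`, the complexified squared distance to every
point of the sphere has positive real part, so `t ↦ (T u)(x₀ + t • (x - x₀))` extends
holomorphically there. The extension vanishes for real `t` near `0`, hence everywhere, and `t = 1`
gives `x`.
-/

open MeasureTheory Metric Complex

noncomputable section

open Set Filter Topology Function

section ParametricIntegral

variable {α : Type*} [TopologicalSpace α] [MeasurableSpace α] [OpensMeasurableSpace α]
  {𝕜 : Type*} [RCLike 𝕜]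

theorem hasDerivAt_integral_of_continuousOn_of_isCompact {μ : Measure α} {K : Set α}
    (hK : IsCompact K) (hKm : MeasurableSet K) (hμK : ∀ᵐ y ∂μ, y ∈ K) {U : Set 𝕜} (hU : IsOpen U)
    {g : α → 𝕜} (hg : Integrable g μ) {F F' : 𝕜 → α → 𝕜}
    (hF : ContinuousOn (uncurry F) (U ×ˢ K)) (hF' : ContinuousOn (uncurry F') (U ×ˢ K))
    (hderiv : ∀ z ∈ U, ∀ y ∈ K, HasDerivAt (F · y) (F' z y) z) {z₀ : 𝕜} (hz₀ : z₀ ∈ U) :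
    HasDerivAt (fun z => ∫ y, g y * F z y ∂μ) (∫ y, g y * F' z₀ y ∂μ) z₀ := by
  have hμ : μ.restrict K = μ := Measure.restrict_eq_self_of_ae_mem hμK
  have hmeas : ∀ {G : 𝕜 → α → 𝕜}, ContinuousOn (uncurry G) (U ×ˢ K) → ∀ z ∈ U,
      AEStronglyMeasurable (fun y => g y * G z y) μ := fun hG z hz =>
    hg.aestronglyMeasurable.mul <| hμ ▸ (hG.comp (Continuous.prodMk_right z).continuousOn
      fun y hy => ⟨hz, hy⟩).aestronglyMeasurable_of_isCompact hK hKm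
  obtain ⟨r, hr, hrU⟩ := nhds_basis_closedBall.mem_iff.1 (hU.mem_nhds hz₀)
  have hcomp : IsCompact (closedBall z₀ r ×ˢ K) := (isCompact_closedBall _ _).prod hK
  have hsub : closedBall z₀ r ×ˢ K ⊆ U ×ˢ K := prod_mono hrU subset_rfl
  obtain ⟨C, hC⟩ := hcomp.exists_bound_of_continuousOn (hF.mono hsub)
  obtain ⟨C', hC'⟩ := hcomp.exists_bound_of_continuousOn (hF'.mono hsub)
  have hball : ∀ z ∈ ball z₀ r, z ∈ U := fun z hz => hrU (ball_subset_closedBall hz)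
  refine (hasDerivAt_integral_of_dominated_loc_of_deriv_le (ball_mem_nhds z₀ hr)
    (eventually_of_mem (ball_mem_nhds z₀ hr) fun z hz => hmeas hF z (hball z hz)) ?_
    (F' := fun z y => g y * F' z y) (hmeas hF' z₀ hz₀) ?_ (hg.norm.mul_const C') ?_).2
  · refine (hg.norm.mul_const C).mono' (hmeas hF z₀ hz₀) ?_
    filter_upwards [hμK] with y hy
    rw [norm_mul]
    exact mul_le_mul_of_nonneg_left (hC (z₀, y) ⟨mem_closedBall_self hr.le, hy⟩) (norm_nonneg _)
  · filter_upwards [hμK] with y hy z hz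
    rw [norm_mul]
    exact mul_le_mul_of_nonneg_left (hC' (z, y) ⟨ball_subset_closedBall hz, hy⟩) (norm_nonneg _)
  · filter_upwards [hμK] with y hy z hz
    exact (hderiv z (hball z hz) y hy).const_mul (g y)

end ParametricIntegral

theorem AnalyticOnNhd.eqOn_zero_of_preconnected_of_eventually_ofReal_eq_zero
    {E : Type*} [NormedAddCommGroup E] [NormedSpace ℂ E] {f : ℂ → E} {U : Set ℂ}
    (hf : AnalyticOnNhd ℂ f U) (hU : IsPreconnected U) {t₀ : ℝ} (h₀ : (t₀ : ℂ) ∈ U)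
    (hf₀ : ∀ᶠ t : ℝ in 𝓝 t₀, f t = 0) : EqOn f 0 U := by
  refine hf.eqOn_zero_of_preconnected_of_frequently_eq_zero hU h₀ ?_
  have : Tendsto ((↑) : ℝ → ℂ) (𝓝[≠] t₀) (𝓝[≠] (t₀ : ℂ)) :=
    continuous_ofReal.continuousWithinAt.tendsto_nhdsWithin fun t ht => by simpa using ht
  exact this.frequently (hf₀.filter_mono nhdsWithin_le_nhds).frequently

section Line

variable {E : Type*} [NormedAddCommGroup E] [InnerProductSpace ℝ E]

def lineSqDist (a v : E) (z : ℂ) (y : E) : ℂ :=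
  (‖a - y‖ ^ 2 : ℝ) + 2 * z * (inner ℝ (a - y) v : ℝ) + z ^ 2 * (‖v‖ ^ 2 : ℝ)

theorem lineSqDist_ofReal (a v : E) (t : ℝ) (y : E) :
    lineSqDist a v t y = (‖a + t • v - y‖ ^ 2 : ℝ) := by
  rw [show a + t • v - y = (a - y) + t • v by abel, norm_add_sq_real, real_inner_smul_right,
    norm_smul, mul_pow, Real.norm_eq_abs, sq_abs, lineSqDist]
  push_cast
  ring

theorem re_lineSqDist (a v : E) (z : ℂ) (y : E) :
    (lineSqDist a v z y).re = ‖a + z.re • v - y‖ ^ 2 - z.im ^ 2 * ‖v‖ ^ 2 := by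
  have h := congrArg re (lineSqDist_ofReal a v z.re y)
  simp only [lineSqDist, add_re, mul_re, ofReal_re, ofReal_im, re_ofNat, im_ofNat, sq,
    mul_im] at h ⊢
  linear_combination h

theorem hasDerivAt_lineSqDist (a v : E) (z : ℂ) (y : E) :
    HasDerivAt (lineSqDist a v · y)
      (2 * (inner ℝ (a - y) v : ℝ) + 2 * z * (‖v‖ ^ 2 : ℝ)) z := by
  have h := ((((hasDerivAt_id z).const_mul 2).mul_const ((inner ℝ (a - y) v : ℝ) : ℂ)).const_add
    ((‖a - y‖ ^ 2 : ℝ) : ℂ)).add ((hasDerivAt_pow 2 z).mul_const ((‖v‖ ^ 2 : ℝ) : ℂ))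
  exact h.congr_deriv (by simp)

theorem continuous_lineSqDist (a v : E) : Continuous (uncurry (lineSqDist a v)) := by
  unfold lineSqDist uncurry
  fun_prop

theorem re_lineSqDist_pos {a v y : E} {z : ℂ} (h : ‖a + z.re • v‖ + |z.im| * ‖v‖ < ‖y‖) :
    0 < (lineSqDist a v z y).re := by
  have hdist : |z.im| * ‖v‖ < ‖a + z.re • v - y‖ := by
    have := norm_sub_norm_le y (a + z.re • v)
    rw [norm_sub_rev] at this
    linarith
  rw [re_lineSqDist, sub_pos, ← sq_abs z.im, ← mul_pow]
  exact pow_lt_pow_left₀ hdist (by positivity) two_ne_zero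

def lineTube (a v : E) (R : ℝ) : Set ℂ :=
  {z | ‖a + z.re • v‖ + |z.im| * ‖v‖ < R}

theorem ofReal_mem_lineTube {a v : E} {R t : ℝ} : (t : ℂ) ∈ lineTube a v R ↔ ‖a + t • v‖ < R := by
  simp [lineTube]

theorem isOpen_lineTube (a v : E) (R : ℝ) : IsOpen (lineTube a v R) :=
  isOpen_lt (by fun_prop) continuous_const

theorem convex_lineTube (a v : E) (R : ℝ) : Convex ℝ (lineTube a v R) := by
  have hconv : ConvexOn ℝ univ fun z : ℂ => ‖a + z.re • v‖ + |z.im| * ‖v‖ := by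
    refine ⟨convex_univ, fun z _ w _ s t hs ht hst => ?_⟩
    obtain rfl : t = 1 - s := by linarith
    have hre : a + (s • z + (1 - s) • w).re • v =
        s • (a + z.re • v) + (1 - s) • (a + w.re • v) := by
      simp only [add_re, smul_re, smul_eq_mul]
      module
    have him : |(s • z + (1 - s) • w).im| ≤ s * |z.im| + (1 - s) * |w.im| := by
      simp only [add_im, smul_im, smul_eq_mul]
      refine (abs_add_le _ _).trans_eq ?_
      rw [abs_mul, abs_mul, abs_of_nonneg hs, abs_of_nonneg ht]
    have hnorm := norm_add_le (s • (a + z.re • v)) ((1 - s) • (a + w.re • v))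
    rw [norm_smul, norm_smul, Real.norm_of_nonneg hs, Real.norm_of_nonneg ht] at hnorm
    simp only [smul_eq_mul, hre]
    nlinarith [mul_le_mul_of_nonneg_right him (norm_nonneg v)]
  simpa [lineTube] using hconv.convex_lt R

end Line

def helmholtzKernel (k : ℝ) (w : ℂ) : ℂ :=
  cexp (I * k * w ^ (1 / 2 : ℂ)) / (4 * Real.pi * w ^ (1 / 2 : ℂ))

theorem differentiableOn_helmholtzKernel (k : ℝ) :
    DifferentiableOn ℂ (helmholtzKernel k) slitPlane := fun w hw => by
  have hsqrt : DifferentiableAt ℂ (· ^ (1 / 2 : ℂ)) w := differentiableAt_id.cpow_const hw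
  refine ((hsqrt.const_mul _).cexp.div (hsqrt.const_mul _) ?_).differentiableWithinAt
  simp [Real.pi_ne_zero, cpow_eq_zero_iff, slitPlane_ne_zero hw]

theorem helmholtzKernel_ofReal_sq (k : ℝ) {r : ℝ} (hr : 0 ≤ r) :
    helmholtzKernel k (r ^ 2 : ℝ) = cexp (I * k * r) / (4 * Real.pi * r) := by
  have hsqrt : ((r ^ 2 : ℝ) : ℂ) ^ (1 / 2 : ℂ) = r := by
    rw [show (1 / 2 : ℂ) = ((1 / 2 : ℝ) : ℂ) by norm_num, ← ofReal_cpow (by positivity),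
      ← Real.sqrt_eq_rpow, Real.sqrt_sq hr]
  rw [helmholtzKernel, hsqrt]

/-- This holds also at `x = y`, where both sides are `0` since `0 ^ (1 / 2 : ℂ) = 0`. -/
theorem conjG_eq_helmholtzKernel (k : ℝ) (x y : EuclideanSpace ℝ (Fin 3)) :
    conjG k x y = helmholtzKernel k (‖x - y‖ ^ 2 : ℝ) := by
  rw [helmholtzKernel_ofReal_sq k (norm_nonneg _), conjG]

theorem analyticOnNhd_integral_helmholtzKernel_lineSqDist {E : Type*} [NormedAddCommGroup E]
    [InnerProductSpace ℝ E] [ProperSpace E] [MeasurableSpace E] [OpensMeasurableSpace E]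
    {μ : Measure E} {R : ℝ} (hμ : ∀ᵐ y ∂μ, y ∈ sphere 0 R) {g : E → ℂ} (hg : Integrable g μ)
    (k : ℝ) (a v : E) :
    AnalyticOnNhd ℂ (fun z => ∫ y, g y * helmholtzKernel k (lineSqDist a v z y) ∂μ)
      (lineTube a v R) := by
  have hslit : ∀ p ∈ lineTube a v R ×ˢ sphere (0 : E) R,
      uncurry (lineSqDist a v) p ∈ slitPlane := fun p ⟨hz, hy⟩ =>
    Or.inl <| re_lineSqDist_pos <| by rwa [mem_sphere_zero_iff_norm.1 hy]
  have hkernel := (differentiableOn_helmholtzKernel k).analyticOnNhd isOpen_slitPlane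
  have hQ := (continuous_lineSqDist a v).continuousOn (s := lineTube a v R ×ˢ sphere (0 : E) R)
  refine DifferentiableOn.analyticOnNhd (fun z hz => ?_) (isOpen_lineTube a v R)
  refine (hasDerivAt_integral_of_continuousOn_of_isCompact (isCompact_sphere 0 R)
    isClosed_sphere.measurableSet hμ (isOpen_lineTube a v R) hg
    (F := fun z y => helmholtzKernel k (lineSqDist a v z y))
    (F' := fun z y => deriv (helmholtzKernel k) (lineSqDist a v z y) *
      (2 * (inner ℝ (a - y) v : ℝ) + 2 * z * (‖v‖ ^ 2 : ℝ)))
    (hkernel.continuousOn.comp hQ hslit)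
    ((hkernel.deriv.continuousOn.comp hQ hslit).mul (by fun_prop))
    (fun z hz y hy => ?_) hz).differentiableAt.differentiableWithinAt
  exact (hkernel _ (hslit (z, y) ⟨hz, hy⟩)).differentiableAt.hasDerivAt.comp z
    (hasDerivAt_lineSqDist a v z y)

instance (R : ℝ) : IsFiniteMeasure (sphereSurfaceMeasure R) :=
  ⟨ENNReal.mul_lt_top ENNReal.ofReal_lt_top (measure_lt_top _ _)⟩

theorem sphereSurfaceMeasure_ae_mem_sphere {R : ℝ} (hR : 0 ≤ R) :
    ∀ᵐ y ∂sphereSurfaceMeasure R, y ∈ sphere 0 R := by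
  refine Measure.ae_smul_measure ?_ _
  have hS : MeasurableSet (sphere (0 : EuclideanSpace ℝ (Fin 3)) R) := isClosed_sphere.measurableSet
  rw [ae_map_iff (p := (· ∈ sphere 0 R)) (measurable_const_smul R).aemeasurable hS,
    ae_map_iff measurable_subtype_coe.aemeasurable (hS.preimage (measurable_const_smul R))]
  refine Eventually.of_forall fun y => ?_
  simp [norm_smul, abs_of_nonneg hR]

theorem T_vanishes_on_ball_of_vanishes_on_open_general
    (k R : ℝ)
    (u : EuclideanSpace ℝ (Fin 3) → ℂ)
    (hu : MemLp u 2 (sphereSurfaceMeasure R))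
    (Ω : Set (EuclideanSpace ℝ (Fin 3))) (hΩ_open : IsOpen Ω) (hΩ_ne : Ω.Nonempty)
    (hΩ_sub : Ω ⊆ ball (0 : EuclideanSpace ℝ (Fin 3)) R)
    (h : ∀ x ∈ Ω, ∫ y, u y * conjG k x y ∂(sphereSurfaceMeasure R) = 0) :
    ∀ x ∈ ball (0 : EuclideanSpace ℝ (Fin 3)) R,
      ∫ y, u y * conjG k x y ∂(sphereSurfaceMeasure R) = 0 := by
  obtain ⟨x₀, hx₀Ω⟩ := hΩ_ne
  have hx₀ : ‖x₀‖ < R := mem_ball_zero_iff.1 (hΩ_sub hx₀Ω)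
  intro x hx
  set H : ℂ → ℂ := fun z => ∫ y, u y * helmholtzKernel k (lineSqDist x₀ (x - x₀) z y)
    ∂sphereSurfaceMeasure R
  have hH_ofReal (t : ℝ) :
      H t = ∫ y, u y * conjG k (x₀ + t • (x - x₀)) y ∂sphereSurfaceMeasure R := by
    simp only [H, lineSqDist_ofReal, conjG_eq_helmholtzKernel]
  have hH : AnalyticOnNhd ℂ H (lineTube x₀ (x - x₀) R) :=
    analyticOnNhd_integral_helmholtzKernel_lineSqDist
      (sphereSurfaceMeasure_ae_mem_sphere ((norm_nonneg _).trans hx₀.le))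
      (hu.integrable one_le_two) k x₀ (x - x₀)
  have hH_zero : ∀ᶠ t : ℝ in 𝓝 0, H t = 0 := by
    have hline : Tendsto (fun t : ℝ => x₀ + t • (x - x₀)) (𝓝 0) (𝓝 x₀) := by
      simpa using ((continuous_id.smul continuous_const).const_add x₀).tendsto (0 : ℝ)
    filter_upwards [hline (hΩ_open.mem_nhds hx₀Ω)] with t ht
    rw [hH_ofReal]
    exact h _ ht
  have h₀ : ((0 : ℝ) : ℂ) ∈ lineTube x₀ (x - x₀) R := ofReal_mem_lineTube.2 (by simpa using hx₀)
  have h₁ : ((1 : ℝ) : ℂ) ∈ lineTube x₀ (x - x₀) R :=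
    ofReal_mem_lineTube.2 (by simpa using mem_ball_zero_iff.1 hx)
  have hH₁ := hH.eqOn_zero_of_preconnected_of_eventually_ofReal_eq_zero
    (convex_lineTube _ _ _).isPreconnected h₀ hH_zero h₁
  rwa [hH_ofReal, one_smul, add_sub_cancel] at hH₁

/-- Unique continuation for `T u`: if `(T u)(x) = ∫_S u(y) conj G(x,y) dσ(y)` vanishes on a
nonempty open subset `Ω` of the open ball `B(0, R)`, then it vanishes on all of `B(0, R)`. -/
theorem T_vanishes_on_ball_of_vanishes_on_open
    (k R : ℝ) (hk : 0 < k) (hR : 0 < R)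
    (u : EuclideanSpace ℝ (Fin 3) → ℂ)
    (hu : MemLp u 2 (sphereSurfaceMeasure R))
    (Ω : Set (EuclideanSpace ℝ (Fin 3))) (hΩ_open : IsOpen Ω) (hΩ_ne : Ω.Nonempty)
    (hΩ_sub : Ω ⊆ ball (0 : EuclideanSpace ℝ (Fin 3)) R)
    (h : ∀ x ∈ Ω, ∫ y, u y * conjG k x y ∂(sphereSurfaceMeasure R) = 0) :
    ∀ x ∈ ball (0 : EuclideanSpace ℝ (Fin 3)) R,
      ∫ y, u y * conjG k x y ∂(sphereSurfaceMeasure R) = 0 :=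
  T_vanishes_on_ball_of_vanishes_on_open_general k R u hu Ω hΩ_open hΩ_ne hΩ_sub h
end
end

section
/- Let k > 0, let x ∈ ℝ³, and let d ∈ ℝ³ with ‖d‖ = 1. Then, as r → ∞, r·exp(−𝐢kr)·exp(𝐢k‖x − r·d‖)/(4π‖x − r·d‖) converges to (1/(4π))·exp(−𝐢k⟪x,d⟫). That is, the conjugated Green's function conj(G(x,y)) = exp(𝐢k‖x−y‖)/(4π‖x−y‖) satisfies lim_{r→∞} r·e^{−𝐢kr}·conj(G(x, r·d)) = conj(G^∞(x,d)) along each ray y = r·d, where G^∞(x,d) = (1/(4π))·exp(𝐢k⟪x,d⟫) is the far-field pattern of the Green's function. -/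
/-!
Write `ρ(r) = ‖x - r • d‖`. Since `ρ(r)² = r² - 2r⟪x, d⟫ + ‖x‖²`, we get `ρ(r)/r → 1` and
`ρ(r) - r = (ρ² - r²)/(ρ + r) → -⟪x, d⟫`. The expression equals
`(r/ρ) · exp(𝐢k(ρ - r)) / (4π)`, so it tends to `exp(-𝐢k⟪x, d⟫) / (4π)`.
-/

open Filter Topology
open scoped RealInnerProductSpace

section Ray

variable {E : Type*} [NormedAddCommGroup E] [InnerProductSpace ℝ E] {x d : E}

theorem norm_sub_smul_sq_of_norm_eq_one (hd : ‖d‖ = 1) (r : ℝ) :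
    ‖x - r • d‖ ^ 2 = ‖x‖ ^ 2 - 2 * r * ⟪x, d⟫ + r ^ 2 := by
  rw [norm_sub_sq_real, real_inner_smul_right, norm_smul, hd, mul_one, Real.norm_eq_abs, sq_abs]
  ring

theorem tendsto_norm_sub_smul_div_atTop (hd : ‖d‖ = 1) :
    Tendsto (fun r : ℝ => ‖x - r • d‖ / r) atTop (𝓝 1) := by
  have hlim : Tendsto (fun r : ℝ => ‖r⁻¹ • x - d‖) atTop (𝓝 ‖(0 : ℝ) • x - d‖) :=
    ((tendsto_inv_atTop_zero.smul_const x).sub_const d).norm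
  rw [zero_smul, zero_sub, norm_neg, hd] at hlim
  refine hlim.congr' ?_
  filter_upwards [eventually_gt_atTop 0] with r hr
  rw [div_eq_inv_mul, ← norm_smul_of_nonneg (inv_nonneg.mpr hr.le), smul_sub, smul_smul,
    inv_mul_cancel₀ hr.ne', one_smul]

theorem tendsto_norm_sub_smul_sub_atTop (hd : ‖d‖ = 1) :
    Tendsto (fun r : ℝ => ‖x - r • d‖ - r) atTop (𝓝 (-⟪x, d⟫)) := by
  have hlim : Tendsto (fun r : ℝ => (‖x‖ ^ 2 / r - 2 * ⟪x, d⟫) / (‖x - r • d‖ / r + 1)) atTop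
      (𝓝 ((0 - 2 * ⟪x, d⟫) / (1 + 1))) :=
    ((tendsto_const_nhds.div_atTop tendsto_id).sub_const _).div
      ((tendsto_norm_sub_smul_div_atTop hd).add_const 1) (by norm_num)
  rw [show (0 - 2 * ⟪x, d⟫) / (1 + 1) = -⟪x, d⟫ by ring] at hlim
  refine hlim.congr' ?_
  filter_upwards [eventually_gt_atTop 0] with r hr
  have hden : ‖x - r • d‖ / r + 1 ≠ 0 := by positivity
  -- `(ρ - r)(ρ/r + 1) = (ρ² - r²)/r`
  rw [div_eq_iff hden, ← sub_eq_zero]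
  field_simp
  linear_combination -norm_sub_smul_sq_of_norm_eq_one (x := x) hd r

end Ray

theorem conjG_farfield_limit_general
    (k : ℝ) (x d : EuclideanSpace ℝ (Fin 3)) (hd : ‖d‖ = 1) :
    Filter.Tendsto
      (fun r : ℝ =>
        (r : ℂ) * Complex.exp (-(Complex.I * (k : ℂ) * (r : ℂ))) *
          (Complex.exp (Complex.I * (k : ℂ) * (‖x - r • d‖ : ℂ)) /
            (4 * (Real.pi : ℂ) * (‖x - r • d‖ : ℂ))))
      Filter.atTop
      (nhds ((1 / (4 * (Real.pi : ℂ))) * Complex.exp (-(Complex.I * (k : ℂ) * (⟪x, d⟫ : ℂ))))) := by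
  have hratio := tendsto_norm_sub_smul_div_atTop (x := x) hd
  have hphase : Tendsto (fun r : ℝ => Complex.exp (Complex.I * k * ((‖x - r • d‖ - r : ℝ) : ℂ)))
      atTop (𝓝 (Complex.exp (Complex.I * k * ((-⟪x, d⟫ : ℝ) : ℂ)))) :=
    ((by fun_prop : Continuous fun t : ℝ => Complex.exp (Complex.I * k * t)).tendsto _).comp
      (tendsto_norm_sub_smul_sub_atTop hd)
  have hlim := ((hratio.inv₀ one_ne_zero).ofReal.mul hphase).const_mul (1 / (4 * (Real.pi : ℂ)))
  rw [inv_one, Complex.ofReal_one, one_mul, Complex.ofReal_neg, mul_neg] at hlim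
  refine hlim.congr' ?_
  filter_upwards [hratio.eventually_ne one_ne_zero] with r hρ
  have hρ' : (‖x - r • d‖ : ℂ) ≠ 0 := mod_cast (div_ne_zero_iff.mp hρ).1
  rw [inv_div, Complex.ofReal_sub, mul_sub, Complex.exp_sub, Complex.exp_neg]
  push_cast
  field_simp

/-- Far-field limit of the conjugated Helmholtz Green's function along a ray `y = r • d`:
`r · e^{-𝐢 k r} · exp(𝐢 k ‖x - r d‖)/(4π ‖x - r d‖) → (1/(4π)) · exp(-𝐢 k ⟪x, d⟫)`
as `r → ∞`. -/
theorem conjG_farfield_limit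
    (k : ℝ) (hk : 0 < k) (x d : EuclideanSpace ℝ (Fin 3)) (hd : ‖d‖ = 1) :
    Filter.Tendsto
      (fun r : ℝ =>
        (r : ℂ) * Complex.exp (-(Complex.I * (k : ℂ) * (r : ℂ))) *
          (Complex.exp (Complex.I * (k : ℂ) * (‖x - r • d‖ : ℂ)) /
            (4 * (Real.pi : ℂ) * (‖x - r • d‖ : ℂ))))
      Filter.atTop
      (nhds ((1 / (4 * (Real.pi : ℂ))) * Complex.exp (-(Complex.I * (k : ℂ) * (⟪x, d⟫ : ℂ))))) :=
  conjG_farfield_limit_general k x d hd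
end

section
/- Let k > 0, let x ∈ ℝ³, and let d ∈ ℝ³ with ‖d‖ = 1. Then for every real r > 0 with r ≥ 2‖x‖, the following quantitative far-field estimate for the conjugated Green's function holds: | r·exp(−𝐢kr)·exp(𝐢k‖x − r·d‖)/(4π‖x − r·d‖) − (1/(4π))·exp(−𝐢k⟪x,d⟫) | ≤ (2‖x‖ + k‖x‖²)/(4πr). -/
open scoped RealInnerProductSpace

noncomputable section

/-!
Write `R = ‖x - r • d‖` and `a = ⟪x, d⟫`. Pulling out the unimodular factor `exp (𝐢k(R - r))`,
the difference becomes `(r / R - exp (-𝐢k(R - r + a))) / (4π)`. The amplitude error satisfies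
`|r / R - 1| = |R - r| / R ≤ 2‖x‖ / r`, because `|R - r| ≤ ‖x‖` and `R ≥ r / 2`. The phase error
is at most `k (R - r + a)`, and `0 ≤ R - r + a = (‖x‖² - a²) / (R + r - a) ≤ ‖x‖² / r`
since `R ≥ r - a ≥ r / 2`.
-/

section UnitDirection

variable {E : Type*} [NormedAddCommGroup E] [InnerProductSpace ℝ E] {d : E}

lemma norm_sub_smul_sq (hd : ‖d‖ = 1) (x : E) (r : ℝ) :
    ‖x - r • d‖ ^ 2 = ‖x‖ ^ 2 - 2 * r * ⟪x, d⟫ + r ^ 2 := by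
  rw [norm_sub_sq_real, real_inner_smul_right, norm_smul, hd, Real.norm_eq_abs, mul_one, sq_abs]
  ring

lemma sub_inner_le_norm_sub_smul (hd : ‖d‖ = 1) (x : E) (r : ℝ) :
    r - ⟪x, d⟫ ≤ ‖x - r • d‖ := by
  have h := real_inner_le_norm (r • d - x) d
  rw [inner_sub_left, real_inner_smul_left, real_inner_self_eq_norm_sq, hd, norm_sub_rev] at h
  linarith

lemma abs_norm_sub_smul_sub_le (hd : ‖d‖ = 1) (x : E) {r : ℝ} (hr : 0 ≤ r) :
    |‖x - r • d‖ - r| ≤ ‖x‖ := by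
  simpa [norm_smul, hd, abs_of_nonneg hr] using abs_norm_sub_norm_le (x - r • d) (-(r • d))

lemma abs_div_norm_sub_smul_sub_one_le (hd : ‖d‖ = 1) (x : E) {r : ℝ} (hr : 0 < r)
    (hxr : 2 * ‖x‖ ≤ r) : |r / ‖x - r • d‖ - 1| ≤ 2 * ‖x‖ / r := by
  have hdist := abs_norm_sub_smul_sub_le hd x hr.le
  have hR : r / 2 ≤ ‖x - r • d‖ := by linarith [(abs_le.mp hdist).1]
  have hRpos : 0 < ‖x - r • d‖ := by linarith
  rw [div_sub_one hRpos.ne', abs_div, abs_sub_comm, abs_of_pos hRpos, div_le_div_iff₀ hRpos hr]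
  nlinarith [mul_le_mul_of_nonneg_right hdist hr.le, mul_le_mul_of_nonneg_left hR (norm_nonneg x)]

lemma norm_sub_smul_sub_add_inner_le (hd : ‖d‖ = 1) (x : E) {r : ℝ} (hr : 0 < r)
    (hxr : 2 * ⟪x, d⟫ ≤ r) : ‖x - r • d‖ - r + ⟪x, d⟫ ≤ ‖x‖ ^ 2 / r := by
  have hsq := norm_sub_smul_sq hd x r
  have hlow := sub_inner_le_norm_sub_smul hd x r
  have hprod : (‖x - r • d‖ - r + ⟪x, d⟫) * (‖x - r • d‖ + r - ⟪x, d⟫) = ‖x‖ ^ 2 - ⟪x, d⟫ ^ 2 := by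
    linear_combination hsq
  rw [le_div_iff₀ hr]
  nlinarith [sq_nonneg ⟪x, d⟫]

end UnitDirection

open Complex

lemma norm_ofReal_sub_exp_I_mul_le (t θ : ℝ) : ‖(t : ℂ) - exp (I * θ)‖ ≤ |t - 1| + |θ| := by
  calc ‖(t : ℂ) - exp (I * θ)‖ ≤ ‖(t : ℂ) - 1‖ + ‖exp (I * θ) - 1‖ := by
        simpa only [norm_sub_rev (1 : ℂ)] using
          norm_sub_le_norm_sub_add_norm_sub (t : ℂ) 1 (exp (I * θ))
    _ ≤ |t - 1| + |θ| := by
        gcongr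
        · rw [← ofReal_one, ← ofReal_sub, norm_real, Real.norm_eq_abs]
        · exact Real.norm_exp_I_mul_ofReal_sub_one_le

lemma norm_farfield_sub_eq (k r R a : ℝ) :
    ‖(r : ℂ) * exp (-(I * k * r)) * (exp (I * k * R) / (4 * Real.pi * R)) -
        1 / (4 * Real.pi) * exp (-(I * k * a))‖
      = ‖((r / R : ℝ) : ℂ) - exp (I * ((-(k * (R - r + a)) : ℝ) : ℂ))‖ / (4 * Real.pi) := by
  have hamp : exp (-(I * k * r)) * exp (I * k * R) = exp (I * ((k * (R - r) : ℝ) : ℂ)) := by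
    rw [← exp_add]; push_cast; ring_nf
  have hphase : exp (I * ((k * (R - r) : ℝ) : ℂ)) * exp (I * ((-(k * (R - r + a)) : ℝ) : ℂ))
      = exp (-(I * k * a)) := by
    rw [← exp_add]; push_cast; ring_nf
  have hfactor : (r : ℂ) * exp (-(I * k * r)) * (exp (I * k * R) / (4 * Real.pi * R)) -
        1 / (4 * Real.pi) * exp (-(I * k * a))
      = exp (I * ((k * (R - r) : ℝ) : ℂ)) *
          (((r / R : ℝ) : ℂ) - exp (I * ((-(k * (R - r + a)) : ℝ) : ℂ))) / (4 * Real.pi) := by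
    rw [← hphase, ofReal_div]
    linear_combination ((r : ℂ) / (4 * Real.pi * R)) * hamp
  have hπ : ‖(4 * Real.pi : ℂ)‖ = 4 * Real.pi := by
    rw [← ofReal_ofNat, ← ofReal_mul, norm_real, Real.norm_of_nonneg (by positivity)]
  rw [hfactor, norm_div, norm_mul, norm_exp_I_mul_ofReal, one_mul, hπ]

/-- Quantitative far-field estimate for the conjugated Helmholtz Green's function:
for a unit vector `d`, `r > 0` and `r ≥ 2‖x‖`,
`|r · e^{-𝐢kr} · exp(𝐢k‖x - r d‖)/(4π‖x - r d‖) - (1/(4π)) · exp(-𝐢k⟪x,d⟫)|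
  ≤ (2‖x‖ + k‖x‖²)/(4πr)`. -/
theorem conjG_farfield_estimate
    (k : ℝ) (hk : 0 < k) (x d : EuclideanSpace ℝ (Fin 3)) (hd : ‖d‖ = 1)
    (r : ℝ) (hr : 0 < r) (hrx : 2 * ‖x‖ ≤ r) :
    ‖((r : ℂ) * Complex.exp (-(Complex.I * (k : ℂ) * (r : ℂ))) *
            (Complex.exp (Complex.I * (k : ℂ) * (‖x - r • d‖ : ℂ)) /
              (4 * (Real.pi : ℂ) * (‖x - r • d‖ : ℂ))) -
          (1 / (4 * (Real.pi : ℂ))) * Complex.exp (-(Complex.I * (k : ℂ) * (⟪x, d⟫ : ℂ))))‖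
      ≤ (2 * ‖x‖ + k * ‖x‖ ^ 2) / (4 * Real.pi * r) := by
  set R := ‖x - r • d‖
  set a := ⟪x, d⟫
  have hamp : |r / R - 1| ≤ 2 * ‖x‖ / r := abs_div_norm_sub_smul_sub_one_le hd x hr hrx
  have hphase_nonneg : 0 ≤ R - r + a := by linarith [sub_inner_le_norm_sub_smul hd x r]
  have hphase : R - r + a ≤ ‖x‖ ^ 2 / r := by
    refine norm_sub_smul_sub_add_inner_le hd x hr ?_
    have hinner := real_inner_le_norm x d
    rw [hd, mul_one] at hinner
    linarith
  calc _ = ‖((r / R : ℝ) : ℂ) - exp (I * ((-(k * (R - r + a)) : ℝ) : ℂ))‖ / (4 * Real.pi) :=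
        norm_farfield_sub_eq k r R a
    _ ≤ (|r / R - 1| + |-(k * (R - r + a))|) / (4 * Real.pi) := by
        gcongr; exact norm_ofReal_sub_exp_I_mul_le _ _
    _ ≤ (2 * ‖x‖ / r + k * (‖x‖ ^ 2 / r)) / (4 * Real.pi) := by
        rw [abs_neg, abs_of_nonneg (mul_nonneg hk.le hphase_nonneg)]
        gcongr (?_ + k * ?_) / _
    _ = (2 * ‖x‖ + k * ‖x‖ ^ 2) / (4 * Real.pi * r) := by
        field_simp
end
end

section
/- Let k > 0 and r₀ > 0. Let u^s : ℝ³ → ℂ be continuous on {y : ‖y‖ ≥ r₀} and let u^∞ : S² → ℂ be continuous on the unit sphere S² = {d ∈ ℝ³ : ‖d‖ = 1}, and suppose there exists C₀ ≥ 0 such that |r·exp(−𝐢kr)·u^s(r·d) − u^∞(d)| ≤ C₀/r for all unit vectors d and all r ≥ r₀ (the far-field asymptotic of the scattered field). For R > 0 define the near-field index function Φ^R(x) = | ∫_{S_R} u^s(y)·exp(𝐢k‖x−y‖)/(4π‖x−y‖) dσ_R(y) |, where S_R is the sphere of radius R centered at the origin with surface measure σ_R, and define the far-field index function Φ^∞(x)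 = | (1/(4π)) ∫_{S²} u^∞(d)·exp(−𝐢k⟪x,d⟫) dσ₁(d) |, where σ₁ is the surface measure on the unit sphere. Then for every fixed x ∈ ℝ³ there exists a constant C (depending on x, k, C₀, u^∞ but not on R) such that |Φ^R(x) − Φ^∞(x)| ≤ C/R for all R ≥ max(r₀, 2‖x‖). In particular, the near-field index function converges to the far-field index function as the measurement radius R tends to infinity. -/
open MeasureTheory Metric Complex
open scoped RealInnerProductSpace

noncomputable section

/-! Pull both integrals back to the unit sphere, where `σ_R` is `R²` times the image of `σ₁`
under `d ↦ R • d`. For `y = R • d` one has `‖x - y‖ = R - ⟪x, d⟫ + O(‖x‖² / R)` and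
`R / ‖x - y‖ = 1 + O(‖x‖ / R)`, so the near-field integrand `R² u^s(R d) conj G(x, R d)` agrees
with `e^{2𝐢kR}` times the far-field integrand up to `O(1 / R)`, uniformly in `d`. The unimodular
factor `e^{2𝐢kR}` does not change the modulus of the far-field integral. -/

local notation "E3" => EuclideanSpace ℝ (Fin 3)

lemma norm_exp_I_mul_ofReal_sub_exp_I_mul_ofReal_le (a b : ℝ) :
    ‖exp (I * a) - exp (I * b)‖ ≤ |a - b| := by
  have h : exp (I * a) - exp (I * b) = exp (I * b) * (exp (I * ↑(a - b)) - 1) := by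
    rw [mul_sub, ← exp_add]; push_cast; ring_nf
  rw [h, norm_mul, norm_exp_I_mul_ofReal, one_mul, ← Real.norm_eq_abs]
  exact Real.norm_exp_I_mul_ofReal_sub_one_le

lemma norm_mul_exp_mul_sub_mul_exp_le (A u q : ℂ) (a b : ℝ) :
    ‖A * exp (I * a) * q - u * exp (I * b)‖
      ≤ ‖A - u‖ * ‖q‖ + ‖u‖ * ‖q - 1‖ + ‖u‖ * |a - b| := by
  calc ‖A * exp (I * a) * q - u * exp (I * b)‖
      = ‖(A - u) * exp (I * a) * q + u * exp (I * a) * (q - 1)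
          + u * (exp (I * a) - exp (I * b))‖ := by ring_nf
    _ ≤ ‖(A - u) * exp (I * a) * q‖ + ‖u * exp (I * a) * (q - 1)‖
          + ‖u * (exp (I * a) - exp (I * b))‖ := norm_add₃_le
    _ ≤ _ := by
      simp only [norm_mul, norm_exp_I_mul_ofReal, mul_one]
      gcongr
      exact norm_exp_I_mul_ofReal_sub_exp_I_mul_ofReal_le a b

section Geometry

variable {V : Type*} [NormedAddCommGroup V] [InnerProductSpace ℝ V]

lemma abs_norm_sub_smul_sub_le_s9 {x d : V} (hd : ‖d‖ = 1) {R : ℝ} (hR : 0 ≤ R) :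
    |‖x - R • d‖ - R| ≤ ‖x‖ := by
  have h := abs_norm_sub_norm_le (R • d) (R • d - x)
  rwa [norm_smul, hd, Real.norm_of_nonneg hR, mul_one, sub_sub_cancel, norm_sub_rev,
    abs_sub_comm] at h

lemma half_le_norm_sub_smul {x d : V} (hd : ‖d‖ = 1) {R : ℝ} (hR : 0 ≤ R)
    (hxR : 2 * ‖x‖ ≤ R) : R / 2 ≤ ‖x - R • d‖ := by
  linarith [(abs_le.1 (abs_norm_sub_smul_sub_le_s9 (x := x) hd hR)).1]

lemma abs_div_norm_sub_smul_sub_one_le_s9 {x d : V} (hd : ‖d‖ = 1) {R : ℝ} (hR : 0 < R)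
    (hxR : 2 * ‖x‖ ≤ R) : |R / ‖x - R • d‖ - 1| ≤ 2 * ‖x‖ / R := by
  have hρ := half_le_norm_sub_smul hd hR.le hxR
  have hρ0 : 0 < ‖x - R • d‖ := by linarith
  rw [div_sub_one hρ0.ne', abs_div, abs_of_pos hρ0, abs_sub_comm, div_le_div_iff₀ hρ0 hR]
  nlinarith [abs_norm_sub_smul_sub_le_s9 (x := x) hd hR.le, abs_nonneg (‖x - R • d‖ - R)]

lemma abs_norm_sub_smul_sub_sub_inner_le {x d : V} (hd : ‖d‖ = 1) {R : ℝ} (hR : 0 < R)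
    (hxR : 2 * ‖x‖ ≤ R) :
    |‖x - R • d‖ - (R - ⟪x, d⟫)| ≤ ‖x‖ ^ 2 / R := by
  set ρ := ‖x - R • d‖
  set t := ⟪x, d⟫
  have hsq : ρ ^ 2 = ‖x‖ ^ 2 - 2 * (R * t) + R ^ 2 := by
    rw [norm_sub_sq_real, real_inner_smul_right, norm_smul, hd, Real.norm_of_nonneg hR.le,
      mul_one]
  have ht : |t| ≤ ‖x‖ := by simpa [hd] using abs_real_inner_le_norm x d
  have ht2 : t ^ 2 ≤ ‖x‖ ^ 2 := sq_le_sq' (abs_le.1 ht).1 (abs_le.1 ht).2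
  have htR : t ≤ R / 2 := by linarith [le_abs_self t]
  -- `ρ ^ 2 - (R - t) ^ 2 = ‖x‖ ^ 2 - t ^ 2`, and `ρ + (R - t) ≥ R` once `ρ ≥ R - t`.
  have hρ : R - t ≤ ρ := by
    apply abs_le_of_sq_le_sq' _ (norm_nonneg _) |>.2
    nlinarith
  rw [abs_of_nonneg (by linarith), le_div_iff₀ hR]
  nlinarith

end Geometry

lemma norm_smul_mul_conjG_sub_exp_mul_le {k C₀ M R : ℝ} {x d : E3} (hd : ‖d‖ = 1)
    (hR : 0 < R) (hxR : 2 * ‖x‖ ≤ R) {v u : ℂ}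
    (hfar : ‖(R : ℂ) * exp (-(I * k * R)) * v - u‖ ≤ C₀ / R) (hu : ‖u‖ ≤ M) :
    ‖(R ^ 2 : ℝ) • (v * conjG k x (R • d))
        - exp (I * ↑(k * (2 * R))) *
          (1 / (4 * (Real.pi : ℂ)) * (u * exp (-(I * k * (⟪x, d⟫ : ℝ)))))‖
      ≤ (2 * C₀ + M * (2 * ‖x‖ + |k| * ‖x‖ ^ 2)) / (4 * Real.pi) / R := by
  set ρ := ‖x - R • d‖ with hρ_def
  set t := ⟪x, d⟫
  set A := (R : ℂ) * exp (-(I * k * R)) * v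
  have hρ : R / 2 ≤ ρ := half_le_norm_sub_smul hd hR.le hxR
  have hρ0 : 0 < ρ := by linarith
  have hratio : |R / ρ| ≤ 2 := by
    rw [abs_of_pos (by positivity), div_le_iff₀ hρ0]; linarith
  have hratio_sub_one : |R / ρ - 1| ≤ 2 * ‖x‖ / R := abs_div_norm_sub_smul_sub_one_le_s9 hd hR hxR
  have hphase : |k * (R + ρ) - k * (2 * R - t)| ≤ |k| * (‖x‖ ^ 2 / R) := by
    rw [← mul_sub, abs_mul, show R + ρ - (2 * R - t) = ρ - (R - t) by ring]
    exact mul_le_mul_of_nonneg_left (abs_norm_sub_smul_sub_sub_inner_le hd hR hxR)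
      (abs_nonneg k)
  have hid : (R ^ 2 : ℝ) • (v * conjG k x (R • d))
        - exp (I * ↑(k * (2 * R))) *
          (1 / (4 * (Real.pi : ℂ)) * (u * exp (-(I * k * (t : ℝ)))))
      = 1 / (4 * (Real.pi : ℂ)) * (A * exp (I * ↑(k * (R + ρ))) * ↑(R / ρ)
          - u * exp (I * ↑(k * (2 * R - t)))) := by
    have hρ0' : (ρ : ℂ) ≠ 0 := ofReal_ne_zero.2 hρ0.ne'
    simp only [conjG, ← hρ_def, A, ofReal_mul, ofReal_add, ofReal_sub, ofReal_div, ofReal_pow,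
      mul_add, mul_sub, exp_add, exp_sub, exp_neg, real_smul]
    field_simp
  have hfourpi : ‖1 / (4 * (Real.pi : ℂ))‖ = 1 / (4 * Real.pi) := by
    simp [Real.pi_pos.le]
  have hM : 0 ≤ M := (norm_nonneg u).trans hu
  have hmain : ‖A * exp (I * ↑(k * (R + ρ))) * ↑(R / ρ) - u * exp (I * ↑(k * (2 * R - t)))‖
      ≤ (2 * C₀ + M * (2 * ‖x‖ + |k| * ‖x‖ ^ 2)) / R :=
    calc _ ≤ ‖A - u‖ * |R / ρ| + ‖u‖ * |R / ρ - 1| + ‖u‖ * |k * (R + ρ) - k * (2 * R - t)| := by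
          have h := norm_mul_exp_mul_sub_mul_exp_le A u (R / ρ : ℝ) (k * (R + ρ)) (k * (2 * R - t))
          rwa [← ofReal_one, ← ofReal_sub, norm_real, norm_real, Real.norm_eq_abs,
            Real.norm_eq_abs] at h
      _ ≤ C₀ / R * 2 + M * (2 * ‖x‖ / R) + M * (|k| * (‖x‖ ^ 2 / R)) := by
          have : 0 ≤ C₀ / R := (norm_nonneg _).trans hfar
          gcongr
      _ = (2 * C₀ + M * (2 * ‖x‖ + |k| * ‖x‖ ^ 2)) / R := by ring
  rw [hid, norm_mul, hfourpi]
  calc _ ≤ 1 / (4 * Real.pi) * ((2 * C₀ + M * (2 * ‖x‖ + |k| * ‖x‖ ^ 2)) / R) := by gcongr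
    _ = _ := by ring

lemma integral_sphereSurfaceMeasure {F : Type*} [NormedAddCommGroup F] [NormedSpace ℝ F]
    {R : ℝ} (hR : R ≠ 0) (f : E3 → F) :
    ∫ y, f y ∂(sphereSurfaceMeasure R)
      = (R ^ 2 : ℝ) •
          ∫ d : sphere (0 : E3) 1, f (R • (d : E3)) ∂(volume : Measure E3).toSphere := by
  have hsmul : MeasurableEmbedding (fun y : E3 => R • y) :=
    (Homeomorph.smulOfNeZero R hR).measurableEmbedding
  have hval : MeasurableEmbedding (Subtype.val : sphere (0 : E3) 1 → E3) :=
    .subtype_coe isClosed_sphere.measurableSet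
  rw [sphereSurfaceMeasure, integral_smul_measure, ENNReal.toReal_ofReal (sq_nonneg R),
    hsmul.integral_map, hval.integral_map]

lemma integrable_toSphere_comp_smul {E F : Type*} [NormedAddCommGroup E] [NormedSpace ℝ E]
    [FiniteDimensional ℝ E] [MeasurableSpace E] [BorelSpace E] (μ : Measure E)
    [μ.IsAddHaarMeasure] [NormedAddCommGroup F] {f : E → F} {R : ℝ} (hR : 0 ≤ R)
    (hf : ContinuousOn f (sphere 0 R)) :
    Integrable (fun d : sphere (0 : E) 1 => f (R • (d : E))) μ.toSphere :=
  (hf.comp_continuous (continuous_const.smul continuous_subtype_val) fun d => by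
      simp [norm_smul, abs_of_nonneg hR]).integrable_of_hasCompactSupport
    (.of_compactSpace _)

lemma abs_norm_integral_sub_norm_integral_le {α 𝕜 : Type*} [MeasurableSpace α] {μ : Measure α}
    [IsFiniteMeasure μ] [RCLike 𝕜] {f g : α → 𝕜} {p : 𝕜} {ε : ℝ} (hp : ‖p‖ = 1)
    (hf : Integrable f μ) (hg : Integrable g μ) (hfg : ∀ a, ‖f a - p * g a‖ ≤ ε) :
    |‖∫ a, f a ∂μ‖ - ‖∫ a, g a ∂μ‖| ≤ μ.real Set.univ * ε :=
  calc |‖∫ a, f a ∂μ‖ - ‖∫ a, g a ∂μ‖|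
      = |‖∫ a, f a ∂μ‖ - ‖p * ∫ a, g a ∂μ‖| := by rw [norm_mul, hp, one_mul]
    _ ≤ ‖∫ a, f a ∂μ - p * ∫ a, g a ∂μ‖ := abs_norm_sub_norm_le _ _
    _ = ‖∫ a, (f a - p * g a) ∂μ‖ := by
      rw [← integral_const_mul, integral_sub hf (hg.const_mul p)]
    _ ≤ μ.real Set.univ * ε := by
      rw [mul_comm]; exact norm_integral_le_of_norm_le_const (.of_forall hfg)

lemma continuousOn_conjG (k : ℝ) (x : E3) : ContinuousOn (conjG k x) {x}ᶜ := by
  refine ContinuousOn.div (by fun_prop) (by fun_prop) fun y hy => ?_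
  have : ‖x - y‖ ≠ 0 := norm_ne_zero_iff.2 (sub_ne_zero.2 (Ne.symm hy))
  exact mul_ne_zero (by simp [Real.pi_ne_zero]) (ofReal_ne_zero.2 this)

theorem nearfield_index_tendsto_farfield_index_general
    (k r₀ : ℝ) (hr₀ : 0 < r₀)
    (us uinf : EuclideanSpace ℝ (Fin 3) → ℂ)
    (hus : ContinuousOn us {y : EuclideanSpace ℝ (Fin 3) | r₀ ≤ ‖y‖})
    (huinf : ContinuousOn uinf (sphere (0 : EuclideanSpace ℝ (Fin 3)) 1))
    (C₀ : ℝ)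
    (hfar : ∀ d : EuclideanSpace ℝ (Fin 3), ‖d‖ = 1 → ∀ r : ℝ, r₀ ≤ r →
      ‖((r : ℂ) * Complex.exp (-(Complex.I * (k : ℂ) * (r : ℂ))) * us (r • d)
          - uinf d)‖ ≤ C₀ / r)
    (x : EuclideanSpace ℝ (Fin 3)) :
    ∃ C : ℝ, ∀ R : ℝ, max r₀ (2 * ‖x‖) ≤ R →
      |‖(∫ y, us y * conjG k x y ∂(sphereSurfaceMeasure R))‖
          - ‖((1 / (4 * (Real.pi : ℂ))) *
              ∫ d, uinf d * Complex.exp (-(Complex.I * (k : ℂ) * (⟪x, d⟫ : ℂ)))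
                ∂(sphereSurfaceMeasure 1))‖|
        ≤ C / R := by
  obtain ⟨M, hM⟩ := (isCompact_sphere (0 : E3) 1).exists_bound_of_continuousOn huinf
  refine ⟨(volume : Measure E3).toSphere.real Set.univ *
    ((2 * C₀ + M * (2 * ‖x‖ + |k| * ‖x‖ ^ 2)) / (4 * Real.pi)), fun R hR => ?_⟩
  have hr₀R : r₀ ≤ R := le_of_max_le_left hR
  have hxR : 2 * ‖x‖ ≤ R := le_of_max_le_right hR
  have hR₀ : 0 < R := hr₀.trans_le hr₀R
  have hnear : ContinuousOn (fun y => us y * conjG k x y) (sphere 0 R) := by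
    refine (hus.mono fun y hy => ?_).mul ((continuousOn_conjG k x).mono fun y hy => ?_)
    · rw [Set.mem_ofPred_eq, mem_sphere_zero_iff_norm.1 hy]
      exact hr₀R
    · rintro rfl
      linarith [mem_sphere_zero_iff_norm.1 hy]
  have hfarfield : ContinuousOn (fun d => uinf d * exp (-(I * k * (⟪x, d⟫ : ℂ)))) (sphere 0 1) :=
    huinf.mul (by fun_prop)
  rw [integral_sphereSurfaceMeasure hR₀.ne', integral_sphereSurfaceMeasure one_ne_zero,
    one_pow, one_smul, ← integral_smul, ← integral_const_mul, mul_div_assoc]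
  refine abs_norm_integral_sub_norm_integral_le (norm_exp_I_mul_ofReal (k * (2 * R)))
    ((integrable_toSphere_comp_smul _ hR₀.le hnear).smul _)
    ((integrable_toSphere_comp_smul _ zero_le_one hfarfield).const_mul _) fun d => ?_
  simp only [one_smul]
  exact norm_smul_mul_conjG_sub_exp_mul_le (norm_eq_of_mem_sphere d) hR₀ hxR
    (hfar _ (norm_eq_of_mem_sphere d) R hr₀R) (hM _ d.2)

/-- Convergence of the near-field DSM index function to the far-field index function:
if the scattered field `u^s` has the far-field asymptotic
`|r e^{-𝐢kr} u^s(r d) - u^∞(d)| ≤ C₀ / r` for all unit vectors `d` and `r ≥ r₀`, then for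
each fixed `x` there is a constant `C` (independent of `R`) with
`|Φ^R(x) - Φ^∞(x)| ≤ C / R` for all `R ≥ max r₀ (2‖x‖)`, where
`Φ^R(x) = |∫_{S_R} u^s(y) conj G(x,y) dσ_R(y)|` and
`Φ^∞(x) = |(1/(4π)) ∫_{S²} u^∞(d) exp(-𝐢k⟪x,d⟫) dσ₁(d)|`. -/
theorem nearfield_index_tendsto_farfield_index
    (k r₀ : ℝ) (hk : 0 < k) (hr₀ : 0 < r₀)
    (us uinf : EuclideanSpace ℝ (Fin 3) → ℂ)
    (hus : ContinuousOn us {y : EuclideanSpace ℝ (Fin 3) | r₀ ≤ ‖y‖})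
    (huinf : ContinuousOn uinf (sphere (0 : EuclideanSpace ℝ (Fin 3)) 1))
    (C₀ : ℝ) (hC₀ : 0 ≤ C₀)
    (hfar : ∀ d : EuclideanSpace ℝ (Fin 3), ‖d‖ = 1 → ∀ r : ℝ, r₀ ≤ r →
      ‖((r : ℂ) * Complex.exp (-(Complex.I * (k : ℂ) * (r : ℂ))) * us (r • d)
          - uinf d)‖ ≤ C₀ / r)
    (x : EuclideanSpace ℝ (Fin 3)) :
    ∃ C : ℝ, ∀ R : ℝ, max r₀ (2 * ‖x‖) ≤ R →
      |‖(∫ y, us y * conjG k x y ∂(sphereSurfaceMeasure R))‖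
          - ‖((1 / (4 * (Real.pi : ℂ))) *
              ∫ d, uinf d * Complex.exp (-(Complex.I * (k : ℂ) * (⟪x, d⟫ : ℂ)))
                ∂(sphereSurfaceMeasure 1))‖|
        ≤ C / R :=
  nearfield_index_tendsto_farfield_index_general k r₀ hr₀ us uinf hus huinf C₀ hfar x
end
end
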